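/- Let $\{\omega_n\}$ be i.i.d. with symmetric distribution $\mu$ satisfying $\mu((-R,R)^c) \le CR^{-\delta}$, let $a_n \sim n^{-\alpha}$ with $\alpha - 1/\delta > 1/2$, fix $\theta \in (0,\pi)$, and let $\tilde{y}^\omega_L(\theta) = y^\omega_L(\theta) - L\theta$ where $y^\omega_L$ is the Prüfer phase of $H^\omega$ at energy $2\cos\theta$. Then there exists a measurable function $g_\theta : \Omega \to [-\infty,\infty]$ such that for every $\epsilon > 0$, $\mathbb{P}[|\tilde{y}^\omega_L(\theta) - g^\omega_\theta| > \epsilon] \to 0$ as $L \to \infty$; i.e., $\tilde{y}^\omega_L(\theta)$ converges in probability. -/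

import Mathlib

/-!
Each step of the phase is `y (n + 1) - y n - θ = Im log (1 - z n)` with
`‖z n‖ = |a n ω n sin (y n)| / sin θ`, and `Im log (1 - z) = -Im z + O(‖z‖²)`, so the step is
`a n ω n sin² (y n) / sin θ` up to `O((a n ω n)²)`. Truncate `ω n` at `n ^ γ` with
`1 / δ < γ < α - 1 / 2`. By the tail bound and Borel–Cantelli, almost surely the truncation is
eventually inactive. The truncated leading terms are martingale differences (by symmetry of `μ`
and independence) bounded by `|a n| n ^ γ / sin θ`, which is square summable, so their sum is an
L²-bounded martingale and converges almost surely; the error terms are summable. Hence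
`y L - L θ` converges almost surely, and therefore in probability.
-/

open MeasureTheory Filter Real Asymptotics

namespace Complex

lemma abs_im_log_one_sub_add_im_le {z : ℂ} (hz : ‖z‖ ≤ 1 / 2) :
    |(log (1 - z)).im + z.im| ≤ ‖z‖ ^ 2 := by
  have hz1 : ‖-z‖ < 1 := by rw [norm_neg]; linarith
  have hinv : (1 - ‖z‖)⁻¹ ≤ 2 := by
    rw [inv_le_comm₀ (by linarith) two_pos]; linarith
  calc |(log (1 - z)).im + z.im| = |(log (1 + -z) - -z).im| := by simp [sub_eq_add_neg]
    _ ≤ ‖log (1 + -z) - -z‖ := abs_im_le_norm _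
    _ ≤ ‖z‖ ^ 2 * (1 - ‖z‖)⁻¹ / 2 := by simpa using norm_log_one_add_sub_self_le hz1
    _ ≤ ‖z‖ ^ 2 * 2 / 2 := by gcongr
    _ = ‖z‖ ^ 2 := by ring

lemma abs_im_log_one_sub_ofReal_mul_exp_sub_le {c φ : ℝ} (hc : |c| ≤ 1 / 2) :
    |(log (1 - c * exp (-(φ * I)))).im - c * Real.sin φ| ≤ c ^ 2 := by
  have hexp : exp (-(φ * I)) = exp ((-φ : ℝ) * I) := by push_cast; ring_nf
  have hnorm : ‖(c : ℂ) * exp (-(φ * I))‖ = |c| := by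
    rw [hexp, norm_mul, norm_real, Real.norm_eq_abs, norm_exp_ofReal_mul_I, mul_one]
  have him : ((c : ℂ) * exp (-(φ * I))).im = -(c * Real.sin φ) := by
    rw [hexp, im_ofReal_mul, exp_ofReal_mul_I_im, Real.sin_neg, mul_neg]
  have := abs_im_log_one_sub_add_im_le (hnorm ▸ hc)
  rwa [him, hnorm, sq_abs, ← sub_eq_add_neg] at this

end Complex

/-- The phase step `y (n + 1) - y n - θ`, with `v = a n * ω n` and `φ = y n`. -/
noncomputable def prueferIncrement (θ v φ : ℝ) : ℝ :=
  (Complex.log (1 - ↑(v * Real.sin φ / Real.sin θ) * Complex.exp (-(↑φ * Complex.I)))).im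

lemma abs_prueferIncrement_mul_sub_le {θ φ s t R : ℝ} (hsθ : 0 < Real.sin θ) (ht : |t| < R)
    (hsmall : |s| * R / Real.sin θ ≤ 1 / 2) :
    |prueferIncrement θ (s * t) φ - s * Real.sin φ ^ 2 / Real.sin θ * t| ≤
      (|s| * R / Real.sin θ) ^ 2 := by
  have hc : |s * t * Real.sin φ / Real.sin θ| ≤ |s| * R / Real.sin θ := by
    have htφ : |t| * |Real.sin φ| ≤ R := by
      nlinarith [abs_nonneg t, Real.abs_sin_le_one φ, abs_nonneg (Real.sin φ)]
    rw [abs_div, abs_of_pos hsθ, abs_mul, abs_mul, mul_assoc]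
    gcongr
  calc _ = |prueferIncrement θ (s * t) φ - s * t * Real.sin φ / Real.sin θ * Real.sin φ| := by
          ring_nf
    _ ≤ (s * t * Real.sin φ / Real.sin θ) ^ 2 :=
          Complex.abs_im_log_one_sub_ofReal_mul_exp_sub_le (hc.trans hsmall)
    _ ≤ (|s| * R / Real.sin θ) ^ 2 := by
          rw [← sq_abs]; exact pow_le_pow_left₀ (abs_nonneg _) hc 2

lemma abs_mul_sin_sq_div_mul_le {θ : ℝ} (hsθ : 0 < Real.sin θ) (s φ : ℝ) {R : ℝ} (hR : 0 ≤ R) :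
    |s * Real.sin φ ^ 2 / Real.sin θ| * R ≤ |s| * R / Real.sin θ := by
  rw [abs_div, abs_mul, abs_of_pos hsθ, abs_of_nonneg (sq_nonneg (Real.sin φ)),
    div_mul_eq_mul_div]
  gcongr
  exact mul_le_of_le_one_right (abs_nonneg s) (Real.sin_sq_le_one φ)

lemma abs_indicator_Ioo_neg_id_le {R : ℝ} (hR : 0 ≤ R) (t : ℝ) :
    |(Set.Ioo (-R) R).indicator id t| ≤ R := by
  by_cases ht : t ∈ Set.Ioo (-R) R
  · rw [Set.indicator_of_mem ht]; exact abs_le.mpr ⟨ht.1.le, ht.2.le⟩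
  · rw [Set.indicator_of_notMem ht, abs_zero]; exact hR

lemma summable_sq_mul_rpow_of_isBigO {a : ℕ → ℝ} {α γ : ℝ}
    (ha : (fun n : ℕ => a n * (n : ℝ) ^ α) =O[atTop] fun _ => (1 : ℝ)) (hγ : γ < α - 1 / 2) :
    Summable fun n : ℕ => (a n * (n : ℝ) ^ γ) ^ 2 := by
  refine summable_of_isBigO_nat (g := fun n : ℕ => (n : ℝ) ^ (2 * (γ - α)))
    (Real.summable_nat_rpow.mpr (by linarith)) ?_
  have hsplit : ∀ᶠ n : ℕ in atTop,
      (a n * (n : ℝ) ^ α) ^ 2 * (n : ℝ) ^ (2 * (γ - α)) = (a n * (n : ℝ) ^ γ) ^ 2 := by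
    filter_upwards [eventually_gt_atTop 0] with n hn
    have hn' : (0 : ℝ) < n := Nat.cast_pos.mpr hn
    rw [mul_comm 2, Real.rpow_mul hn'.le, Real.rpow_sub hn', Real.rpow_two]
    field_simp
  simpa using ((ha.pow 2).mul (isBigO_refl (fun n : ℕ => (n : ℝ) ^ (2 * (γ - α))) atTop)).congr'
    hsplit (Eventually.of_forall fun n => by simp)

lemma exists_tendsto_sum_of_eventually_abs_sub_le {f g e : ℕ → ℝ} {l : ℝ}
    (hg : Tendsto (fun k => ∑ n ∈ Finset.range k, g n) atTop (nhds l)) (he : Summable e)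
    (hfg : ∀ᶠ n in atTop, |f n - g n| ≤ e n) :
    ∃ l', Tendsto (fun k => ∑ n ∈ Finset.range k, f n) atTop (nhds l') := by
  have hs : Summable fun n => f n - g n := he.of_norm_bounded_eventually_nat hfg
  refine ⟨l + ∑' n, (f n - g n), ?_⟩
  simpa [← Finset.sum_add_distrib] using hg.add hs.hasSum.tendsto_sum_nat

lemma exists_tendsto_pruefer_phase_of_tendsto_sum_truncation {θ : ℝ} (hsθ : 0 < Real.sin θ)
    {a w T ψ : ℕ → ℝ} (hψ1 : ψ 1 = θ)
    (hrec : ∀ n, 1 ≤ n → ψ (n + 1) = ψ n + θ + prueferIncrement θ (a n * w n) (ψ n))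
    (hw : ∀ᶠ n in atTop, |w n| < T n) (hb : Summable fun n => (|a n| * T n / Real.sin θ) ^ 2)
    (hsum : ∃ l, Tendsto (fun k => ∑ n ∈ Finset.range k, a (n + 1) * Real.sin (ψ (n + 1)) ^ 2 /
      Real.sin θ * (Set.Ioo (-T (n + 1)) (T (n + 1))).indicator id (w (n + 1))) atTop (nhds l)) :
    ∃ l, Tendsto (fun k : ℕ => ψ (k + 1) - ((k : ℝ) + 1) * θ) atTop (nhds l) := by
  obtain ⟨l, hl⟩ := hsum
  have hsmall : ∀ᶠ n in atTop, |a n| * T n / Real.sin θ ≤ 1 / 2 := by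
    filter_upwards [hb.tendsto_atTop_zero.eventually_le_const (by norm_num : (0 : ℝ) < 1 / 4)]
      with n hn
    nlinarith
  have htel : ∀ k : ℕ, ψ (k + 1) - ((k : ℝ) + 1) * θ =
      ∑ n ∈ Finset.range k, (ψ (n + 2) - ψ (n + 1) - θ) := by
    intro k
    induction k with
    | zero => simp [hψ1]
    | succ k ih => rw [Finset.sum_range_succ, ← ih]; push_cast; ring
  simp_rw [htel]
  refine exists_tendsto_sum_of_eventually_abs_sub_le hl ((summable_nat_add_iff 1).mpr hb) ?_
  filter_upwards [(tendsto_add_atTop_nat 1).eventually hw,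
    (tendsto_add_atTop_nat 1).eventually hsmall] with n hwn hbn
  rw [hrec (n + 1) (by omega), Set.indicator_of_mem
    (show w (n + 1) ∈ Set.Ioo (-T (n + 1)) (T (n + 1)) from abs_lt.mp hwn), id]
  convert abs_prueferIncrement_mul_sub_le hsθ hwn hbn using 2
  ring

section Probability

variable {Ω : Type*} {m0 : MeasurableSpace Ω} {P : Measure Ω} {ω : ℕ → Ω → ℝ}

lemma integrable_of_abs_le [IsFiniteMeasure P] {f : Ω → ℝ} {B : ℝ} (hf : Measurable f)
    (hB : ∀ x, |f x| ≤ B) : Integrable f P :=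
  .of_bound hf.aestronglyMeasurable B (ae_of_all _ hB)

lemma ae_eventually_notMem_of_summable_measureReal [IsFiniteMeasure P] {s : ℕ → Set Ω}
    (hs : Summable fun n => P.real (s n)) : ∀ᵐ x ∂P, ∀ᶠ n in atTop, x ∉ s n := by
  refine ae_eventually_notMem ?_
  rw [tsum_congr fun n => (ENNReal.coe_toNNReal (measure_ne_top P (s n))).symm]
  exact ENNReal.tsum_coe_ne_top_iff_summable_coe.mpr hs

lemma ae_eventually_abs_lt_rpow_of_tail [IsFiniteMeasure P] {μ : Measure ℝ}
    (hmeas : ∀ n, Measurable (ω n)) (hdist : ∀ n, P.map (ω n) = μ) {C R₀ δ γ : ℝ} (hC : 0 < C)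
    (hγ : 0 < γ) (hγδ : 1 < γ * δ)
    (htail : ∀ R : ℝ, R₀ ≤ R → μ {t : ℝ | R ≤ |t|} ≤ ENNReal.ofReal (C * R ^ (-δ))) :
    ∀ᵐ x ∂P, ∀ᶠ n : ℕ in atTop, |ω n x| < (n : ℝ) ^ γ := by
  have hsum : Summable fun n : ℕ => P.real {x | (n : ℝ) ^ γ ≤ |ω n x|} := by
    refine Summable.of_norm_bounded_eventually_nat
      ((Real.summable_nat_rpow.mpr (neg_lt_neg hγδ)).mul_left C) ?_
    have hT : Tendsto (fun n : ℕ => (n : ℝ) ^ γ) atTop atTop :=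
      (tendsto_rpow_atTop hγ).comp tendsto_natCast_atTop_atTop
    filter_upwards [hT.eventually_ge_atTop R₀] with n hn
    have hpre : {x | (n : ℝ) ^ γ ≤ |ω n x|} = ω n ⁻¹' {t | (n : ℝ) ^ γ ≤ |t|} := rfl
    rw [Real.norm_of_nonneg measureReal_nonneg, hpre, ← map_measureReal_apply (hmeas n)
      (measurableSet_le measurable_const continuous_abs.measurable), hdist n, ← mul_neg,
      Real.rpow_mul (Nat.cast_nonneg n)]
    exact ENNReal.toReal_le_of_le_ofReal (by positivity) (htail _ hn)
  filter_upwards [ae_eventually_notMem_of_summable_measureReal hsum] with x hx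
  filter_upwards [hx] with n hn
  simpa using hn

lemma exists_measurable_tendsto_measure_lt_abs_sub [IsFiniteMeasure P] {Y : ℕ → Ω → ℝ}
    (hY : ∀ k, Measurable (Y k)) (hae : ∀ᵐ x ∂P, ∃ l, Tendsto (fun k => Y k x) atTop (nhds l)) :
    ∃ g : Ω → ℝ, Measurable g ∧ ∀ ε : ℝ, 0 < ε →
      Tendsto (fun k => P {x | ε < |Y k x - g x|}) atTop (nhds 0) := by
  obtain ⟨g, hg, hlim⟩ := measurable_limit_of_tendsto_metrizable_ae
    (fun k => (hY k).aemeasurable) hae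
  have hmeas := tendstoInMeasure_iff_norm.mp
    (tendstoInMeasure_of_tendsto_ae (fun k => (hY k).aestronglyMeasurable) hlim)
  refine ⟨g, hg, fun ε hε => tendsto_of_tendsto_of_tendsto_of_le_of_le tendsto_const_nhds
    (hmeas ε hε) (fun _ => zero_le) fun k => measure_mono fun x hx => ?_⟩
  exact (show ε < |Y k x - g x| from hx).le

lemma integral_mul_eq_zero_of_condExp_eq_zero {m : MeasurableSpace Ω} (hm : m ≤ m0)
    [SigmaFinite (P.trim hm)] {X Y : Ω → ℝ} (hX : StronglyMeasurable[m] X)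
    (hXY : Integrable (X * Y) P) (hY : Integrable Y P) (hcond : P[Y | m] =ᵐ[P] 0) :
    ∫ x, X x * Y x ∂P = 0 := by
  have hpull : P[X * Y | m] =ᵐ[P] 0 := by
    filter_upwards [condExp_mul_of_stronglyMeasurable_left hX hXY hY, hcond] with x hx hx'
    simp [hx, hx']
  change ∫ x, (X * Y) x ∂P = 0
  rw [← integral_condExp hm, integral_congr_ae hpull, Pi.zero_def, integral_zero]

lemma eLpNorm_one_le_of_integral_sq_le [IsProbabilityMeasure P] {f : Ω → ℝ} {V : ℝ}
    (hf : Integrable f P) (hf2 : Integrable (fun x => f x ^ 2) P)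
    (hV : ∫ x, f x ^ 2 ∂P ≤ V) : eLpNorm f 1 P ≤ ENNReal.ofReal ((1 + V) / 2) := by
  rw [eLpNorm_one_eq_lintegral_enorm, ← ofReal_integral_norm_eq_lintegral_enorm hf]
  gcongr
  calc ∫ x, ‖f x‖ ∂P ≤ ∫ x, (1 + f x ^ 2) / 2 ∂P := by
        refine integral_mono hf.norm (((integrable_const 1).add hf2).div_const 2) fun x => ?_
        nlinarith [sq_nonneg (|f x| - 1), sq_abs (f x), Real.norm_eq_abs (f x)]
    _ = (1 + ∫ x, f x ^ 2 ∂P) / 2 := by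
        rw [integral_div, integral_add (integrable_const 1) hf2, integral_const, probReal_univ,
          one_smul]
    _ ≤ (1 + V) / 2 := by linarith

section MartingaleDifferences

variable {ℱ : Filtration ℕ m0} {d : ℕ → Ω → ℝ} {b : ℕ → ℝ}

lemma martingale_sum_of_condExp_eq_zero [IsFiniteMeasure P]
    (hd : ∀ n, StronglyMeasurable[ℱ (n + 1)] (d n)) (hint : ∀ n, Integrable (d n) P)
    (hcond : ∀ n, P[d n | ℱ n] =ᵐ[P] 0) :
    Martingale (fun k x => ∑ n ∈ Finset.range k, d n x) ℱ P := by
  have hadapted : StronglyAdapted ℱ fun k x => ∑ n ∈ Finset.range k, d n x := fun k =>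
    Finset.stronglyMeasurable_fun_sum _ fun n hn => (hd n).mono (ℱ.mono (Finset.mem_range.mp hn))
  have hsum_int : ∀ k, Integrable (fun x => ∑ n ∈ Finset.range k, d n x) P := fun k =>
    integrable_finsetSum _ fun n _ => hint n
  refine martingale_nat hadapted hsum_int fun k => ?_
  have hstep : (fun x => ∑ n ∈ Finset.range (k + 1), d n x) =
      (fun x => ∑ n ∈ Finset.range k, d n x) + d k := by
    ext x; simp [Finset.sum_range_succ]
  rw [hstep]
  filter_upwards [condExp_add (hsum_int k) (hint k) (ℱ k), hcond k] with x hadd hk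
  rw [hadd, Pi.add_apply, condExp_of_stronglyMeasurable (ℱ.le k) (hadapted k) (hsum_int k), hk,
    Pi.zero_apply, add_zero]

lemma integral_sq_sum_le_of_condExp_eq_zero [IsProbabilityMeasure P]
    (hd : ∀ n, StronglyMeasurable[ℱ (n + 1)] (d n)) (hdb : ∀ n x, |d n x| ≤ b n)
    (hcond : ∀ n, P[d n | ℱ n] =ᵐ[P] 0) (k : ℕ) :
    ∫ x, (∑ n ∈ Finset.range k, d n x) ^ 2 ∂P ≤ ∑ n ∈ Finset.range k, b n ^ 2 := by
  induction k with
  | zero => simp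
  | succ k ih =>
    set S := fun x => ∑ n ∈ Finset.range k, d n x
    have hS : StronglyMeasurable[ℱ k] S :=
      Finset.stronglyMeasurable_fun_sum _ fun n hn => (hd n).mono (ℱ.mono (Finset.mem_range.mp hn))
    have hSm : Measurable S := hS.measurable.mono (ℱ.le k) le_rfl
    have hdm : Measurable (d k) := (hd k).measurable.mono (ℱ.le _) le_rfl
    have hSb : ∀ x, |S x| ≤ ∑ n ∈ Finset.range k, b n := fun x =>
      (Finset.abs_sum_le_sum_abs _ _).trans (Finset.sum_le_sum fun n _ => hdb n x)
    have hS2 : Integrable (fun x => S x ^ 2) P :=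
      integrable_of_abs_le (hSm.pow_const 2) fun x => by
        rw [abs_pow]; exact pow_le_pow_left₀ (abs_nonneg _) (hSb x) 2
    have hd2 : Integrable (fun x => d k x ^ 2) P :=
      integrable_of_abs_le (hdm.pow_const 2) fun x => by
        rw [abs_pow]; exact pow_le_pow_left₀ (abs_nonneg _) (hdb k x) 2
    have hSd : Integrable (fun x => S x * d k x) P := integrable_of_abs_le (hSm.mul hdm) fun x => by
      rw [abs_mul]
      exact mul_le_mul (hSb x) (hdb k x) (abs_nonneg _) ((abs_nonneg _).trans (hSb x))
    have horth : ∫ x, S x * d k x ∂P = 0 := integral_mul_eq_zero_of_condExp_eq_zero (ℱ.le k) hS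
      hSd (integrable_of_abs_le hdm (hdb k)) (hcond k)
    have hdk : ∫ x, d k x ^ 2 ∂P ≤ b k ^ 2 := by
      calc ∫ x, d k x ^ 2 ∂P ≤ ∫ _, b k ^ 2 ∂P := integral_mono hd2 (integrable_const _) fun x => by
            rw [← sq_abs]; exact pow_le_pow_left₀ (abs_nonneg _) (hdb k x) 2
        _ = b k ^ 2 := by simp
    have hexpand : (fun x => (∑ n ∈ Finset.range (k + 1), d n x) ^ 2) =
        fun x => S x ^ 2 + (2 * (S x * d k x) + d k x ^ 2) := by
      ext x; rw [Finset.sum_range_succ]; ring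
    rw [hexpand, integral_add (g := fun x => 2 * (S x * d k x) + d k x ^ 2) hS2
      ((hSd.const_mul 2).add hd2), integral_add (hSd.const_mul 2) hd2,
      integral_const_mul, horth, Finset.sum_range_succ]
    linarith

theorem ae_exists_tendsto_sum_of_condExp_eq_zero [IsProbabilityMeasure P]
    (hd : ∀ n, StronglyMeasurable[ℱ (n + 1)] (d n)) (hdb : ∀ n x, |d n x| ≤ b n)
    (hb : Summable fun n => b n ^ 2) (hcond : ∀ n, P[d n | ℱ n] =ᵐ[P] 0) :
    ∀ᵐ x ∂P, ∃ l, Tendsto (fun k => ∑ n ∈ Finset.range k, d n x) atTop (nhds l) := by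
  have hdm : ∀ n, Measurable (d n) := fun n => (hd n).measurable.mono (ℱ.le _) le_rfl
  have hmart := martingale_sum_of_condExp_eq_zero hd
    (fun n => integrable_of_abs_le (hdm n) (hdb n)) hcond
  refine hmart.submartingale.exists_ae_tendsto_of_bdd (R := ((1 + ∑' n, b n ^ 2) / 2).toNNReal)
    fun k => ?_
  have hSb : ∀ x, |∑ n ∈ Finset.range k, d n x| ≤ ∑ n ∈ Finset.range k, b n := fun x =>
    (Finset.abs_sum_le_sum_abs _ _).trans (Finset.sum_le_sum fun n _ => hdb n x)
  have hSm : Measurable fun x => ∑ n ∈ Finset.range k, d n x :=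
    Finset.measurable_fun_sum _ fun n _ => hdm n
  refine eLpNorm_one_le_of_integral_sq_le (f := fun x => ∑ n ∈ Finset.range k, d n x)
    (integrable_of_abs_le hSm hSb)
    (integrable_of_abs_le (B := (∑ n ∈ Finset.range k, b n) ^ 2) (hSm.pow_const 2) fun x => ?_) ?_
  · rw [abs_pow]; exact pow_le_pow_left₀ (abs_nonneg _) (hSb x) 2
  · exact (integral_sq_sum_le_of_condExp_eq_zero hd hdb hcond k).trans
      (hb.sum_le_tsum _ fun n _ => sq_nonneg _)

end MartingaleDifferences

lemma measurable_natural_of_recurrence (hmeas : ∀ n, Measurable (ω n)) {F : ℕ → ℝ → ℝ → ℝ}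
    (hF : ∀ n, Measurable (Function.uncurry (F n))) {y : ℕ → Ω → ℝ} {c : ℝ}
    (hy1 : ∀ x, y 1 x = c) (hrec : ∀ n, 1 ≤ n → ∀ x, y (n + 1) x = F n (y n x) (ω n x))
    (k : ℕ) :
    Measurable[Filtration.natural ω (fun n => (hmeas n).stronglyMeasurable) k] (y (k + 1)) := by
  induction k with
  | zero => simp [funext hy1]
  | succ k ih =>
    rw [funext (hrec (k + 1) (by omega))]
    exact (hF (k + 1)).comp ((ih.mono (Filtration.mono _ k.le_succ) le_rfl).prodMk
      (Filtration.stronglyAdapted_natural (fun n => (hmeas n).stronglyMeasurable)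
        (k + 1)).measurable)

lemma condExp_mul_comp_natural_eq_zero [IsProbabilityMeasure P] (hmeas : ∀ n, Measurable (ω n))
    (hind : ProbabilityTheory.iIndepFun ω P) {i j : ℕ} (hij : i < j) {Z : Ω → ℝ} {φ : ℝ → ℝ}
    (hZ : StronglyMeasurable[Filtration.natural ω (fun n => (hmeas n).stronglyMeasurable) i] Z)
    (hφ : Measurable φ) (hZφ : Integrable (Z * (φ ∘ ω j)) P) (hφint : Integrable (φ ∘ ω j) P)
    (hmean : ∫ x, φ (ω j x) ∂P = 0) :
    P[Z * (φ ∘ ω j) | Filtration.natural ω (fun n => (hmeas n).stronglyMeasurable) i]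
      =ᵐ[P] 0 := by
  have hφω : StronglyMeasurable[MeasurableSpace.comap (ω j) inferInstance] (φ ∘ ω j) :=
    (hφ.comp (comap_measurable (ω j))).stronglyMeasurable
  have hconst := condExp_indep_eq (hmeas j).comap_le (Filtration.le _ i) hφω
    (hind.indep_comap_natural_of_lt (fun n => (hmeas n).stronglyMeasurable) hij)
  filter_upwards [condExp_mul_of_stronglyMeasurable_left hZ hZφ hφint, hconst] with x hx hx'
  simp [hx, hx', hmean]

theorem ae_exists_tendsto_sum_mul_truncation [IsProbabilityMeasure P] {μ : Measure ℝ}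
    (hmeas : ∀ n, Measurable (ω n)) (hind : ProbabilityTheory.iIndepFun ω P)
    (hdist : ∀ n, P.map (ω n) = μ) (hsymm : ∀ K : ℝ, 0 < K → ∫ t in Set.Ioo (-K) K, t ∂μ = 0)
    {T b : ℕ → ℝ} {Z : ℕ → Ω → ℝ} (hT : ∀ n, 0 < T n)
    (hZ : ∀ n, Measurable[Filtration.natural ω (fun n => (hmeas n).stronglyMeasurable) n] (Z n))
    (hZb : ∀ n x, |Z n x| * T n ≤ b n) (hb : Summable fun n => b n ^ 2) :
    ∀ᵐ x ∂P, ∃ l, Tendsto (fun k => ∑ n ∈ Finset.range k,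
      Z n x * (Set.Ioo (-T n) (T n)).indicator id (ω (n + 1) x)) atTop (nhds l) := by
  set ℱ := Filtration.natural ω (fun n => (hmeas n).stronglyMeasurable)
  set trunc : ℕ → ℝ → ℝ := fun n => (Set.Ioo (-T n) (T n)).indicator id
  have htrunc : ∀ n, Measurable (trunc n) := fun n => measurable_id.indicator measurableSet_Ioo
  have htrunc_le : ∀ n t, |trunc n t| ≤ T n := fun n => abs_indicator_Ioo_neg_id_le (hT n).le
  have hd : ∀ n, StronglyMeasurable[ℱ (n + 1)] (Z n * (trunc n ∘ ω (n + 1))) := fun n =>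
    (((hZ n).mono (ℱ.mono n.le_succ) le_rfl).mul ((htrunc n).comp
      (Filtration.stronglyAdapted_natural (fun n => (hmeas n).stronglyMeasurable)
        (n + 1)).measurable)).stronglyMeasurable
  have hdb : ∀ n x, |(Z n * (trunc n ∘ ω (n + 1))) x| ≤ b n := fun n x => by
    rw [Pi.mul_apply, abs_mul]
    exact (mul_le_mul_of_nonneg_left (htrunc_le _ _) (abs_nonneg _)).trans (hZb n x)
  have hmean : ∀ n, ∫ x, trunc n (ω (n + 1) x) ∂P = 0 := fun n => by
    rw [← integral_map (hmeas _).aemeasurable (htrunc n).aestronglyMeasurable, hdist,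
      integral_indicator measurableSet_Ioo]
    exact hsymm _ (hT n)
  have hcond : ∀ n, P[Z n * (trunc n ∘ ω (n + 1)) | ℱ n] =ᵐ[P] 0 := fun n =>
    condExp_mul_comp_natural_eq_zero hmeas hind n.lt_succ_self (hZ n).stronglyMeasurable
      (htrunc n) (integrable_of_abs_le ((hd n).measurable.mono (ℱ.le _) le_rfl) (hdb n))
      (integrable_of_abs_le ((htrunc n).comp (hmeas _)) fun x => htrunc_le n _) (hmean n)
  exact ae_exists_tendsto_sum_of_condExp_eq_zero hd hdb hb hcond

end Probability

theorem pruefer_phase_converges_in_probability_general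
    {Ω : Type*} [MeasurableSpace Ω] (P : Measure Ω) [IsProbabilityMeasure P]
    (μ : Measure ℝ) [IsProbabilityMeasure μ]
    (ω : ℕ → Ω → ℝ) (hmeas : ∀ n, Measurable (ω n))
    (hiid : ProbabilityTheory.iIndepFun ω P)
    (hdist : ∀ n, Measure.map (ω n) P = μ)
    (hsymm : ∀ K : ℝ, 0 < K → ∫ t in Set.Ioo (-K) K, t ∂μ = 0)
    (C R₀ δ α : ℝ) (hC : 0 < C) (hδ : 0 < δ)
    (hα : 1 / 2 < α - 1 / δ)
    (htail : ∀ R : ℝ, R₀ ≤ R → μ {t : ℝ | R ≤ |t|} ≤ ENNReal.ofReal (C * R ^ (-δ)))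
    (a : ℕ → ℝ) (ha : Tendsto (fun n : ℕ => a n * (n : ℝ) ^ α) atTop (nhds 1))
    (θ : ℝ) (hθ : θ ∈ Set.Ioo 0 π)
    (y : ℕ → Ω → ℝ) (hy1 : ∀ x : Ω, y 1 x = θ)
    (hyrec : ∀ n : ℕ, 1 ≤ n → ∀ x : Ω,
      y (n + 1) x = y n x + θ +
        (Complex.log (1 - (↑(a n * ω n x * Real.sin (y n x) / Real.sin θ) *
          Complex.exp (-(↑(y n x) * Complex.I))))).im) :
    ∃ g : Ω → ℝ, Measurable g ∧
      ∀ ε : ℝ, 0 < ε →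
        Tendsto (fun L : ℕ => P {x : Ω | ε < |(y L x - (L : ℝ) * θ) - g x|})
          atTop (nhds 0) := by
  -- truncation level `n ^ γ`: `γ δ > 1` for Borel–Cantelli, `2 (α - γ) > 1` for the L² bound
  obtain ⟨γ, hγδ, hγα⟩ : ∃ γ, 1 / δ < γ ∧ γ < α - 1 / 2 := exists_between (by linarith)
  have hγ : 0 < γ := (one_div_pos.mpr hδ).trans hγδ
  have hsθ : 0 < Real.sin θ := Real.sin_pos_of_pos_of_lt_pi hθ.1 hθ.2
  have hy := measurable_natural_of_recurrence hmeas
    (F := fun n φ t => φ + θ + prueferIncrement θ (a n * t) φ)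
    (fun n => by unfold prueferIncrement; fun_prop) hy1 hyrec
  have hb : Summable fun n : ℕ => (|a n| * (n : ℝ) ^ γ / Real.sin θ) ^ 2 :=
    ((summable_sq_mul_rpow_of_isBigO (ha.isBigO_one ℝ) hγα).div_const (Real.sin θ ^ 2)).congr
      fun n => by simp only [div_pow, mul_pow, sq_abs]
  have hsum := ae_exists_tendsto_sum_mul_truncation hmeas hiid hdist hsymm
    (T := fun n => ((n + 1 : ℕ) : ℝ) ^ γ)
    (Z := fun n x => a (n + 1) * Real.sin (y (n + 1) x) ^ 2 / Real.sin θ)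
    (fun n => by positivity) (fun n => by have := hy n; fun_prop)
    (fun n x => abs_mul_sin_sq_div_mul_le hsθ _ _ (by positivity))
    ((summable_nat_add_iff 1).mpr hb)
  have hae : ∀ᵐ x ∂P, ∃ l, Tendsto (fun k : ℕ => y (k + 1) x - ((k : ℝ) + 1) * θ) atTop
      (nhds l) := by
    filter_upwards [hsum, ae_eventually_abs_lt_rpow_of_tail hmeas hdist hC hγ
      ((div_lt_iff₀ hδ).mp hγδ) htail] with x hx hxT
    exact exists_tendsto_pruefer_phase_of_tendsto_sum_truncation (ψ := fun n => y n x)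
      (w := fun n => ω n x) (T := fun n => (n : ℝ) ^ γ) hsθ (hy1 x) (fun n hn => hyrec n hn x)
      hxT hb hx
  obtain ⟨g, hg, hconv⟩ := exists_measurable_tendsto_measure_lt_abs_sub
    (fun k => ((hy k).mono (Filtration.le _ k) le_rfl).sub measurable_const) hae
  refine ⟨g, hg, fun ε hε => (tendsto_add_atTop_iff_nat 1).mp ?_⟩
  simpa using hconv ε hε

theorem pruefer_phase_converges_in_probability
    {Ω : Type*} [MeasurableSpace Ω] (P : Measure Ω) [IsProbabilityMeasure P]
    (μ : Measure ℝ) [IsProbabilityMeasure μ]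
    (ω : ℕ → Ω → ℝ) (hmeas : ∀ n, Measurable (ω n))
    (hiid : ProbabilityTheory.iIndepFun ω P)
    (hdist : ∀ n, Measure.map (ω n) P = μ)
    (hsymm : ∀ K : ℝ, 0 < K → ∫ t in Set.Ioo (-K) K, t ∂μ = 0)
    (C R₀ δ α : ℝ) (hC : 0 < C) (hR₀ : 0 < R₀) (hδ : 0 < δ)
    (hα : 1 / 2 < α - 1 / δ)
    (htail : ∀ R : ℝ, R₀ ≤ R → μ {t : ℝ | R ≤ |t|} ≤ ENNReal.ofReal (C * R ^ (-δ)))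
    (a : ℕ → ℝ) (ha : Tendsto (fun n : ℕ => a n * (n : ℝ) ^ α) atTop (nhds 1))
    (θ : ℝ) (hθ : θ ∈ Set.Ioo 0 π)
    (y : ℕ → Ω → ℝ) (hy1 : ∀ x : Ω, y 1 x = θ)
    (hyrec : ∀ n : ℕ, 1 ≤ n → ∀ x : Ω,
      y (n + 1) x = y n x + θ +
        (Complex.log (1 - (↑(a n * ω n x * Real.sin (y n x) / Real.sin θ) *
          Complex.exp (-(↑(y n x) * Complex.I))))).im) :
    ∃ g : Ω → ℝ, Measurable g ∧
      ∀ ε : ℝ, 0 < ε →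
        Tendsto (fun L : ℕ => P {x : Ω | ε < |(y L x - (L : ℝ) * θ) - g x|})
          atTop (nhds 0) :=
  pruefer_phase_converges_in_probability_general P μ ω hmeas hiid hdist hsymm C R₀ δ α hC hδ hα
    htail a ha θ hθ y hy1 hyrec
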